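/- Let k, r', ρ ∈ ℕ, let M be a finite multiset of vectors in {0,1,□}^d with cover (R_M, T_M), and let M' ⊆ M be such that the compatibility graph G on M' with threshold ρ has at most k connected components; let γ_max(M') be the maximum of γ(C) over the connected components C of G. Then there exists a set D' ⊆ [d] of coordinates with |D'| ≤ k·γ_max(M')·(|M'|−1) + |R_M|·(|M'|−1)·(r'+1) + |T_M| such that for any two vectors m, m' ∈ M' that either lie in the same connected component of G or such that at least one of m, m' belongs to R_M, it holds that δ(m[D'], m'[D']) = δ(m, m') if δ(m, m') ≤ r', and δ(m[D'], m'[D']) > r' otherwise, where m[D'] denotes the restriction of m to the coordinates in D'. -/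

import Mathlib

open scoped Classical

/-- δ(a,b) for incomplete vectors: the number of coordinates on which
both entries are known and differ. -/
noncomputable def pdist {ι : Type} [Fintype ι] (a b : ι → Option Bool) : ℕ :=
  (Finset.univ.filter fun i => ∃ x y : Bool, a i = some x ∧ b i = some y ∧ x ≠ y).card

/-- δ(a[D], b[D]): the number of coordinates in `D` on which both entries are
known and differ (δ of the restrictions to `D`). -/
noncomputable def pdistOn {ι : Type} [Fintype ι] (D : Finset ι) (a b : ι → Option Bool) : ℕ :=
  (D.filter fun i => ∃ x y : Bool, a i = some x ∧ b i = some y ∧ x ≠ y).card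

/-- The compatibility graph on a finite set of incomplete vectors with threshold ρ. -/
def compatGraph {ι : Type} [Fintype ι] (S : Finset (ι → Option Bool)) (ρ : ℕ) :
    SimpleGraph {x // x ∈ S} :=
  SimpleGraph.fromRel fun a b => pdist a.1 b.1 ≤ ρ

/-- γ_max: the maximum diameter of a connected component of the compatibility
graph on `S` with threshold ρ. -/
noncomputable def gammaMax {ι : Type} [Fintype ι]
    (S : Finset (ι → Option Bool)) (ρ : ℕ) : ℕ :=
  sSup {n | ∃ a b : {x // x ∈ S}, (compatGraph S ρ).Reachable a b ∧ pdist a.1 b.1 = n}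


/-!
Take `D' = A ∪ B ∪ T`. In every component of the compatibility graph fix a representative,
outside `R` whenever the component has a vertex outside `R`, and let `A` collect the coordinates
on which a vertex and its representative differ: at most `γ_max` coordinates for each of the
`|M'| - 1` non-representatives. If `m, m' ∉ R` lie in one component, their representative `u` is
not in `R`, so by the cover property `u` is known outside `T`; hence a coordinate where `m`
and `m'` differ lies in `T` or is one where `u` differs from `m` or from `m'`. For each `m ∈ R`
and each other `m'`, the set `B` contains `min (δ(m, m'), r' + 1)` coordinates where they
differ, which is all that is needed to read off `δ(m, m')` up to the threshold `r'`.
-/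

lemma Finset.sum_le_card_sub_one_mul {α : Type*} {s : Finset α} {f : α → ℕ}
    {a : α} {c : ℕ} (ha : a ∈ s) (h0 : f a = 0) (hc : ∀ x ∈ s, f x ≤ c) :
    ∑ x ∈ s, f x ≤ (s.card - 1) * c := by
  rw [← Finset.sum_erase s h0, ← Finset.card_erase_of_mem ha, ← smul_eq_mul]
  exact Finset.sum_le_card_nsmul _ _ _ fun x hx => hc x (Finset.mem_of_mem_erase hx)

lemma SimpleGraph.exists_componentRep {V : Type*} (G : SimpleGraph V) (P : V → Prop) :
    ∃ rep : G.ConnectedComponent → V, ∀ c, G.connectedComponentMk (rep c) = c ∧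
      ((∃ v, G.connectedComponentMk v = c ∧ P v) → P (rep c)) := by
  have h : ∀ c : G.ConnectedComponent, ∃ w, G.connectedComponentMk w = c ∧
      ((∃ v, G.connectedComponentMk v = c ∧ P v) → P w) := by
    intro c
    by_cases hc : ∃ v, G.connectedComponentMk v = c ∧ P v
    · obtain ⟨v, hv, hP⟩ := hc
      exact ⟨v, hv, fun _ => hP⟩
    · obtain ⟨w, hw⟩ := c.exists_rep
      exact ⟨w, hw, fun h' => absurd h' hc⟩
  choose rep hrep using h
  exact ⟨rep, hrep⟩

section IncompleteVectors

variable {ι : Type} [Fintype ι]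

noncomputable def diffSet (a b : ι → Option Bool) : Finset ι :=
  Finset.univ.filter fun i => ∃ x y : Bool, a i = some x ∧ b i = some y ∧ x ≠ y

lemma pdist_eq_card_diffSet (a b : ι → Option Bool) : pdist a b = (diffSet a b).card := rfl

lemma pdistOn_eq_card_inter [DecidableEq ι] (D : Finset ι) (a b : ι → Option Bool) :
    pdistOn D a b = (D ∩ diffSet a b).card := by
  rw [pdistOn, diffSet, Finset.inter_filter, Finset.inter_univ]

lemma diffSet_comm (a b : ι → Option Bool) : diffSet a b = diffSet b a := by
  ext i
  simp only [diffSet, Finset.mem_filter, Finset.mem_univ, true_and]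
  constructor <;> rintro ⟨x, y, hx, hy, hxy⟩ <;> exact ⟨y, x, hy, hx, hxy.symm⟩

lemma diffSet_self (a : ι → Option Bool) : diffSet a a = ∅ := by
  ext i
  simp only [diffSet, Finset.mem_filter, Finset.mem_univ, true_and, Finset.notMem_empty,
    iff_false]
  rintro ⟨x, y, hx, hy, hxy⟩
  exact hxy (Option.some_injective _ (hx.symm.trans hy))

/-- Since `Bool` has two values, a known `u i` differs from one of `a i ≠ b i`. -/
lemma diffSet_subset_union [DecidableEq ι] (u a b : ι → Option Bool) :
    diffSet a b ⊆ diffSet u a ∪ diffSet u b ∪ Finset.univ.filter fun i => u i = none := by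
  intro i hi
  simp only [diffSet, Finset.mem_union, Finset.mem_filter, Finset.mem_univ, true_and] at hi ⊢
  obtain ⟨x, y, hx, hy, hxy⟩ := hi
  cases hu : u i with
  | none => exact Or.inr rfl
  | some z =>
    left
    by_cases hzx : z = x
    · exact Or.inr ⟨z, y, rfl, hy, hzx ▸ hxy⟩
    · exact Or.inl ⟨z, x, rfl, hx, hzx⟩

lemma pdist_comm (a b : ι → Option Bool) : pdist a b = pdist b a := by
  rw [pdist_eq_card_diffSet, pdist_eq_card_diffSet, diffSet_comm]

lemma pdist_self (a : ι → Option Bool) : pdist a a = 0 := by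
  rw [pdist_eq_card_diffSet, diffSet_self, Finset.card_empty]

lemma pdistOn_comm (D : Finset ι) (a b : ι → Option Bool) : pdistOn D a b = pdistOn D b a := by
  rw [pdistOn_eq_card_inter, pdistOn_eq_card_inter, diffSet_comm]

lemma pdistOn_mono {D D' : Finset ι} (h : D ⊆ D') (a b : ι → Option Bool) :
    pdistOn D a b ≤ pdistOn D' a b := by
  rw [pdistOn_eq_card_inter, pdistOn_eq_card_inter]
  exact Finset.card_le_card (Finset.inter_subset_inter_right h)

lemma pdistOn_le_pdist (D : Finset ι) (a b : ι → Option Bool) :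
    pdistOn D a b ≤ pdist a b := by
  rw [pdistOn_eq_card_inter, pdist_eq_card_diffSet]
  exact Finset.card_le_card Finset.inter_subset_right

lemma pdistOn_eq_pdist_of_subset {D : Finset ι} {a b : ι → Option Bool}
    (h : diffSet a b ⊆ D) : pdistOn D a b = pdist a b := by
  rw [pdistOn_eq_card_inter, Finset.inter_eq_right.2 h, pdist_eq_card_diffSet]

def PreservesPdist (r : ℕ) (D : Finset ι) (a b : ι → Option Bool) : Prop :=
  (pdist a b ≤ r → pdistOn D a b = pdist a b) ∧ (r < pdist a b → r < pdistOn D a b)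

lemma PreservesPdist.symm {r : ℕ} {D : Finset ι} {a b : ι → Option Bool}
    (h : PreservesPdist r D a b) : PreservesPdist r D b a := by
  rw [PreservesPdist, pdist_comm, pdistOn_comm]
  exact h

lemma PreservesPdist.mono {r : ℕ} {D D' : Finset ι} {a b : ι → Option Bool}
    (h : PreservesPdist r D a b) (hD : D ⊆ D') : PreservesPdist r D' a b :=
  ⟨fun hle => le_antisymm (pdistOn_le_pdist D' a b) ((h.1 hle).symm.trans_le
      (pdistOn_mono hD a b)),
    fun hlt => (h.2 hlt).trans_le (pdistOn_mono hD a b)⟩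

lemma preservesPdist_of_subset (r : ℕ) {D : Finset ι} {a b : ι → Option Bool}
    (h : diffSet a b ⊆ D) : PreservesPdist r D a b := by
  rw [PreservesPdist, pdistOn_eq_pdist_of_subset h]
  exact ⟨fun _ => rfl, id⟩

lemma exists_preservesPdist_card_le (r : ℕ) (a b : ι → Option Bool) :
    ∃ W ⊆ diffSet a b, W.card ≤ r + 1 ∧ PreservesPdist r W a b := by
  by_cases hab : pdist a b ≤ r
  · exact ⟨diffSet a b, subset_rfl, by rw [← pdist_eq_card_diffSet]; omega,
      preservesPdist_of_subset r subset_rfl⟩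
  · obtain ⟨W, hW, hcard⟩ := Finset.exists_subset_card_eq
      (show r + 1 ≤ (diffSet a b).card by rw [← pdist_eq_card_diffSet]; omega)
    refine ⟨W, hW, hcard.le, fun h => absurd h hab, fun _ => ?_⟩
    rw [pdistOn_eq_card_inter, Finset.inter_eq_left.2 hW, hcard]
    exact Nat.lt_succ_self r

lemma pdist_le_gammaMax (S : Finset (ι → Option Bool)) (ρ : ℕ) {a b : {x // x ∈ S}}
    (h : (compatGraph S ρ).Reachable a b) : pdist a.1 b.1 ≤ gammaMax S ρ := by
  refine le_csSup ⟨Fintype.card ι, ?_⟩ ⟨a, b, h, rfl⟩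
  rintro n ⟨a, b, -, rfl⟩
  exact Finset.card_le_univ _

lemma exists_diffSet_subset_of_reachable [DecidableEq ι]
    (S : Finset (ι → Option Bool)) (ρ : ℕ) (R : Multiset (ι → Option Bool)) (T : Finset ι)
    (hcover : ∀ v ∈ S, ∀ i, v i = none → v ∈ R ∨ i ∈ T) :
    ∃ A : Finset ι, A.card ≤ gammaMax S ρ * (S.card - 1) ∧
      ∀ m (hm : m ∈ S) m' (hm' : m' ∈ S),
        (compatGraph S ρ).Reachable ⟨m, hm⟩ ⟨m', hm'⟩ → m ∉ R → m' ∉ R →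
          diffSet m m' ⊆ A ∪ T := by
  set G := compatGraph S ρ
  obtain ⟨rep, hrep⟩ := G.exists_componentRep fun v => v.1 ∉ R
  set u : {x // x ∈ S} → {x // x ∈ S} := fun v => rep (G.connectedComponentMk v) with hu
  have hu_reach : ∀ v, G.Reachable (u v) v := fun v =>
    SimpleGraph.ConnectedComponent.exact (hrep _).1
  refine ⟨Finset.univ.biUnion fun v => diffSet (u v).1 v.1, ?_, ?_⟩
  · refine Finset.card_biUnion_le.trans ?_
    rcases isEmpty_or_nonempty {x // x ∈ S} with hS | ⟨⟨v₀⟩⟩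
    · simp
    have hfix : u (u v₀) = u v₀ := by simp only [hu, (hrep _).1]
    refine (Finset.sum_le_card_sub_one_mul (Finset.mem_univ (u v₀)) ?_
      fun v _ => pdist_le_gammaMax S ρ (hu_reach v)).trans_eq ?_
    · rw [hfix, pdist_self]
    · rw [Finset.card_univ, Fintype.card_coe, mul_comm]
  · intro m hm m' hm' hreach hmR _
    have hsame : u ⟨m', hm'⟩ = u ⟨m, hm⟩ :=
      congrArg rep (SimpleGraph.ConnectedComponent.sound hreach).symm
    have huR : (u ⟨m, hm⟩).1 ∉ R :=
      (hrep (G.connectedComponentMk ⟨m, hm⟩)).2 ⟨⟨m, hm⟩, rfl, hmR⟩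
    refine (diffSet_subset_union (u ⟨m, hm⟩).1 m m').trans
      (Finset.union_subset_union (Finset.union_subset ?_ ?_) ?_)
    · exact Finset.subset_biUnion_of_mem (fun v => diffSet (u v).1 v.1) (Finset.mem_univ _)
    · rw [← hsame]
      exact Finset.subset_biUnion_of_mem (fun v => diffSet (u v).1 v.1) (Finset.mem_univ _)
    · intro i hi
      exact (hcover _ (u ⟨m, hm⟩).2 i (Finset.mem_filter.1 hi).2).resolve_left huR

lemma exists_preservesPdist_of_mem (S R : Finset (ι → Option Bool)) (r : ℕ) :
    ∃ B : Finset ι, B.card ≤ R.card * (S.card - 1) * (r + 1) ∧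
      ∀ m ∈ S, ∀ m' ∈ S, m ∈ R ∨ m' ∈ R → PreservesPdist r B m m' := by
  choose W hWsub hWcard hWpres using exists_preservesPdist_card_le (ι := ι) r
  set B := (S ∩ R).biUnion fun v => S.biUnion (W v)
  have hWB : ∀ m ∈ S, m ∈ R → ∀ m' ∈ S, W m m' ⊆ B := fun m hm hmR m' hm' =>
    (Finset.subset_biUnion_of_mem (W m) hm').trans
      (Finset.subset_biUnion_of_mem (fun v => S.biUnion (W v)) (Finset.mem_inter.2 ⟨hm, hmR⟩))
  have hWself : ∀ v, (W v v).card = 0 := fun v =>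
    Finset.card_eq_zero.2 (Finset.subset_empty.1 (diffSet_self v ▸ hWsub v v))
  refine ⟨B, ?_, ?_⟩
  · calc B.card ≤ ∑ v ∈ S ∩ R, (S.biUnion (W v)).card := Finset.card_biUnion_le
      _ ≤ ∑ _v ∈ S ∩ R, (S.card - 1) * (r + 1) := Finset.sum_le_sum fun v hv =>
          Finset.card_biUnion_le.trans (Finset.sum_le_card_sub_one_mul (Finset.mem_inter.1 hv).1
            (hWself v) fun w _ => hWcard v w)
      _ = (S ∩ R).card * ((S.card - 1) * (r + 1)) := by rw [Finset.sum_const, smul_eq_mul]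
      _ ≤ R.card * (S.card - 1) * (r + 1) := by
          rw [mul_assoc]
          exact Nat.mul_le_mul_right _ (Finset.card_le_card Finset.inter_subset_right)
  · rintro m hm m' hm' (hmR | hm'R)
    · exact (hWpres m m').mono (hWB m hm hmR m' hm')
    · exact ((hWpres m' m).mono (hWB m' hm' hm'R m hm)).symm

end IncompleteVectors

theorem statement_7_general {d : ℕ} (k r' ρ : ℕ)
    (M R : Multiset (Fin d → Option Bool)) (T : Finset (Fin d))
    (hcover : ∀ v ∈ M, ∀ i : Fin d, v i = none → v ∈ R ∨ i ∈ T)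
    (M' : Multiset (Fin d → Option Bool)) (hM'M : M' ≤ M)
    (hcomp : Nat.card (compatGraph M'.toFinset ρ).ConnectedComponent ≤ k) :
    ∃ D' : Finset (Fin d),
      D'.card ≤ k * gammaMax M'.toFinset ρ * (Multiset.card M' - 1)
          + Multiset.card R * (Multiset.card M' - 1) * (r' + 1) + T.card ∧
      ∀ m, ∀ hm : m ∈ M'.toFinset, ∀ m', ∀ hm' : m' ∈ M'.toFinset,
        ((compatGraph M'.toFinset ρ).Reachable ⟨m, hm⟩ ⟨m', hm'⟩ ∨ m ∈ R ∨ m' ∈ R) →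
          (pdist m m' ≤ r' → pdistOn D' m m' = pdist m m') ∧
          (r' < pdist m m' → r' < pdistOn D' m m') := by
  set S := M'.toFinset
  have hcoverS : ∀ v ∈ S, ∀ i, v i = none → v ∈ R ∨ i ∈ T := fun v hv =>
    hcover v (Multiset.mem_of_le hM'M (Multiset.mem_toFinset.1 hv))
  obtain ⟨A, hAcard, hA⟩ := exists_diffSet_subset_of_reachable S ρ R T hcoverS
  obtain ⟨B, hBcard, hB⟩ := exists_preservesPdist_of_mem S R.toFinset r'
  have hS : S.card ≤ Multiset.card M' := Multiset.toFinset_card_le M'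
  have hA' : A.card ≤ k * gammaMax S ρ * (Multiset.card M' - 1) := by
    rcases S.eq_empty_or_nonempty with hSe | ⟨x, hx⟩
    · rw [hSe, Finset.card_empty, zero_tsub, mul_zero] at hAcard
      exact hAcard.trans (Nat.zero_le _)
    · have : Nonempty {x // x ∈ S} := ⟨⟨x, hx⟩⟩
      have hk : 1 ≤ k := Nat.card_pos.trans_le hcomp
      calc A.card ≤ 1 * gammaMax S ρ * (S.card - 1) := by rwa [one_mul]
        _ ≤ k * gammaMax S ρ * (Multiset.card M' - 1) := by gcongr
  have hB' : B.card ≤ Multiset.card R * (Multiset.card M' - 1) * (r' + 1) :=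
    hBcard.trans (by gcongr; exact Multiset.toFinset_card_le R)
  refine ⟨A ∪ B ∪ T, ?_, fun m hm m' hm' H => ?_⟩
  · calc (A ∪ B ∪ T).card ≤ A.card + B.card + T.card :=
          (Finset.card_union_le _ _).trans (by gcongr; exact Finset.card_union_le _ _)
      _ ≤ _ := by gcongr
  · by_cases hR : m ∈ R ∨ m' ∈ R
    · exact (hB m hm m' hm' (by simpa using hR)).mono
        (Finset.subset_union_right.trans Finset.subset_union_left)
    · exact preservesPdist_of_subset r' ((hA m hm m' hm' (H.resolve_right hR)
        (not_or.1 hR).1 (not_or.1 hR).2).trans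
        (Finset.union_subset_union Finset.subset_union_left subset_rfl))

theorem statement_7 {d : ℕ} (k r' ρ : ℕ)
    (M R : Multiset (Fin d → Option Bool)) (T : Finset (Fin d))
    (hRM : R ≤ M)
    (hcover : ∀ v ∈ M, ∀ i : Fin d, v i = none → v ∈ R ∨ i ∈ T)
    (M' : Multiset (Fin d → Option Bool)) (hM'M : M' ≤ M)
    (hcomp : Nat.card (compatGraph M'.toFinset ρ).ConnectedComponent ≤ k) :
    ∃ D' : Finset (Fin d),
      D'.card ≤ k * gammaMax M'.toFinset ρ * (Multiset.card M' - 1)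
          + Multiset.card R * (Multiset.card M' - 1) * (r' + 1) + T.card ∧
      ∀ m, ∀ hm : m ∈ M'.toFinset, ∀ m', ∀ hm' : m' ∈ M'.toFinset,
        ((compatGraph M'.toFinset ρ).Reachable ⟨m, hm⟩ ⟨m', hm'⟩ ∨ m ∈ R ∨ m' ∈ R) →
          (pdist m m' ≤ r' → pdistOn D' m m' = pdist m m') ∧
          (r' < pdist m m' → r' < pdistOn D' m m') :=
  statement_7_general k r' ρ M R T hcover M' hM'M hcomp
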